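/- arXiv:2510.06192 — 3 statements merged into one kernel-verified Lean document; each statement's English description precedes it below -/
import Mathlib

section
/- For the van der Laan-Padovan sequence, if n ≥ 27 then |Pₙ/(κ₁α₁ⁿ) - 1| < K·δ^{-n}, where α₁ is the plastic ratio, κ₁ = 1/(2α₁ + 3), K = 5.6, and δ = 1.52. -/
theorem padovan_dominant_root_estimate
    (P : ℕ → ℕ) (hP0 : P 0 = 1) (hP1 : P 1 = 0) (hP2 : P 2 = 0)
    (hrec : ∀ n, P (n + 3) = P (n + 1) + P n)
    (α₁ : ℝ) (hα : α₁ ^ 3 - α₁ - 1 = 0) (hαpos : 1 < α₁)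
    (κ₁ : ℝ) (hκ : κ₁ = 1 / (2 * α₁ + 3)) :
    ∀ n : ℕ, 27 ≤ n →
      |(P n : ℝ) / (κ₁ * α₁ ^ n) - 1| < 5.6 * (1.52 : ℝ) ^ (-(n : ℤ)) := by
  intro n hn
  have hal : (1.3247 : ℝ) < α₁ := by
    nlinarith [sq_nonneg (α₁ - 1.3247), sq_nonneg (α₁ - 1.2), sq_nonneg α₁]
  have hau : α₁ < 1.3248 := by
    nlinarith [sq_nonneg (α₁ - 1.3248), sq_nonneg (α₁ - 1.4), sq_nonneg α₁]
  have hα0 : (0:ℝ) < α₁ := by linarith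
  have hκ1 : κ₁ * (2 * α₁ + 3) = 1 := by
    rw [hκ]; field_simp
  have hκl : (0.177 : ℝ) < κ₁ := by nlinarith
  have hκu : κ₁ < (0.17701 : ℝ) := by nlinarith
  set e : ℕ → ℝ := fun m => (P m : ℝ) - κ₁ * α₁ ^ m with he
  have he0 : e 0 = 1 - κ₁ := by simp [he, hP0]
  have he1 : e 1 = -(κ₁ * α₁) := by simp [he, hP1]
  have he2 : e 2 = -(κ₁ * α₁ ^ 2) := by simp [he, hP2]
  have hrec' : ∀ m, e (m + 3) = e (m + 1) + e m := by
    intro m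
    have hc : (P (m + 3) : ℝ) = (P (m + 1) : ℝ) + (P m : ℝ) := by
      rw [hrec]; push_cast; ring
    simp only [he]
    linear_combination hc - κ₁ * α₁ ^ m * hα
  have hz : ∀ m, α₁ * e (m + 2) + α₁ ^ 2 * e (m + 1) + e m = 0 := by
    intro m
    induction m with
    | zero =>
      rw [he2, he1, he0]
      linear_combination (-(2 * κ₁)) * hα - hκ1
    | succ m ih =>
      linear_combination α₁ * ih + α₁ * (hrec' m) + (-(e (m + 1))) * hα
  set Q : ℕ → ℝ := fun m => α₁ * (e (m + 1)) ^ 2 + α₁ ^ 2 * e m * e (m + 1) + (e m) ^ 2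
    with hQdef
  have hQ : ∀ m, α₁ * Q (m + 1) = Q m := by
    intro m
    simp only [hQdef]
    linear_combination (α₁ * e (m + 2) - e m) * hz m
  have hQn : ∀ m, α₁ ^ m * Q m = Q 0 := by
    intro m
    induction m with
    | zero => simp
    | succ m ih =>
      calc α₁ ^ (m + 1) * Q (m + 1) = α₁ ^ m * (α₁ * Q (m + 1)) := by ring
      _ = α₁ ^ m * Q m := by rw [hQ]
      _ = Q 0 := ih
  have hQlb : ∀ m, (3 - α₁) / 4 * (e m) ^ 2 ≤ Q m := by
    intro m
    have h1 : 0 ≤ α₁ * (e (m + 1) + α₁ / 2 * e m) ^ 2 :=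
      mul_nonneg hα0.le (sq_nonneg _)
    simp only [hQdef]
    nlinarith [sq_nonneg (e m)]
  -- key1 : bound on (e n)^2 * α₁^n
  have hapow : (0:ℝ) < α₁ ^ n := pow_pos hα0 n
  have key1 : (3 - α₁) / 4 * (e n) ^ 2 * α₁ ^ n ≤ Q 0 := by
    have := mul_le_mul_of_nonneg_left (hQlb n) hapow.le
    calc (3 - α₁) / 4 * (e n) ^ 2 * α₁ ^ n = α₁ ^ n * ((3 - α₁)/4 * (e n)^2) := by ring
    _ ≤ α₁ ^ n * Q n := this
    _ = Q 0 := hQn n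
  -- key3 : numeric polynomial inequality
  have key3 : Q 0 < 1.1 * ((3 - α₁) / 4) * (5.6 * κ₁) ^ 2 := by
    simp only [hQdef]
    rw [he0, he1]
    nlinarith [sq_nonneg κ₁, sq_nonneg (κ₁ * α₁), hκ1, mul_pos (by linarith : (0:ℝ) < κ₁) hα0]
  -- key2 : power comparison
  obtain ⟨m, rfl⟩ := le_iff_exists_add.mp hn
  have key2 : (1.1 : ℝ) * 2.3104 ^ (27 + m) ≤ (α₁ + 1) ^ (27 + m) := by
    have h27 : (1.1 : ℝ) * 2.3104 ^ 27 ≤ 2.3247 ^ 27 := by norm_num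
    have hA : (2.3247 : ℝ) ^ 27 ≤ (α₁ + 1) ^ 27 :=
      pow_le_pow_left₀ (by norm_num) (by linarith) 27
    have hB : (2.3104 : ℝ) ^ m ≤ (α₁ + 1) ^ m :=
      pow_le_pow_left₀ (by norm_num) (by linarith) m
    calc (1.1 : ℝ) * 2.3104 ^ (27 + m) = (1.1 * 2.3104 ^ 27) * 2.3104 ^ m := by
          rw [pow_add]; ring
    _ ≤ 2.3247 ^ 27 * (α₁ + 1) ^ m := by
          apply mul_le_mul h27 hB (by positivity) (by positivity)
    _ ≤ (α₁ + 1) ^ 27 * (α₁ + 1) ^ m := by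
          apply mul_le_mul_of_nonneg_right hA (by positivity)
    _ = (α₁ + 1) ^ (27 + m) := (pow_add _ _ _).symm
  set N := 27 + m with hN
  -- assemble: (e N)^2 * 2.3104^N < (5.6 κ₁)^2 * (α₁^N)^2
  have hcube : (α₁ + 1) ^ N = (α₁ ^ N) ^ 3 := by
    have h3 : α₁ + 1 = α₁ ^ 3 := by linarith
    rw [h3, ← pow_mul, ← pow_mul, Nat.mul_comm]
  have h231pos : (0:ℝ) < (2.3104 : ℝ) ^ N := by positivity
  have hC : (0:ℝ) < (3 - α₁) / 4 := by linarith
  have main : (e N) ^ 2 * (2.3104 : ℝ) ^ N < (5.6 * κ₁) ^ 2 * (α₁ ^ N) ^ 2 := by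
    have h1 : (3 - α₁) / 4 * ((e N) ^ 2 * (2.3104:ℝ) ^ N) * α₁ ^ N ≤ Q 0 * 2.3104 ^ N := by
      calc (3 - α₁) / 4 * ((e N) ^ 2 * (2.3104:ℝ) ^ N) * α₁ ^ N
          = ((3 - α₁) / 4 * (e N) ^ 2 * α₁ ^ N) * 2.3104 ^ N := by ring
      _ ≤ Q 0 * 2.3104 ^ N := mul_le_mul_of_nonneg_right key1 h231pos.le
    have h2 : Q 0 * 2.3104 ^ N < (3 - α₁) / 4 * (5.6 * κ₁) ^ 2 * ((α₁ ^ N) ^ 3) := by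
      calc Q 0 * 2.3104 ^ N < (1.1 * ((3 - α₁) / 4) * (5.6 * κ₁) ^ 2) * 2.3104 ^ N :=
            (mul_lt_mul_of_pos_right key3 h231pos)
      _ = ((3 - α₁) / 4) * (5.6 * κ₁) ^ 2 * (1.1 * 2.3104 ^ N) := by ring
      _ ≤ ((3 - α₁) / 4) * (5.6 * κ₁) ^ 2 * ((α₁ + 1) ^ N) := by
            apply mul_le_mul_of_nonneg_left key2
            positivity
      _ = (3 - α₁) / 4 * (5.6 * κ₁) ^ 2 * ((α₁ ^ N) ^ 3) := by rw [hcube]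
    have h3 : (3 - α₁) / 4 * ((e N) ^ 2 * (2.3104:ℝ) ^ N) * α₁ ^ N
        < (3 - α₁) / 4 * ((5.6 * κ₁) ^ 2 * (α₁ ^ N) ^ 2) * α₁ ^ N := by
      calc (3 - α₁) / 4 * ((e N) ^ 2 * (2.3104:ℝ) ^ N) * α₁ ^ N ≤ Q 0 * 2.3104 ^ N := h1
      _ < (3 - α₁) / 4 * (5.6 * κ₁) ^ 2 * ((α₁ ^ N) ^ 3) := h2
      _ = (3 - α₁) / 4 * ((5.6 * κ₁) ^ 2 * (α₁ ^ N) ^ 2) * α₁ ^ N := by ring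
    have h4 := lt_of_mul_lt_mul_right h3 (pow_pos hα0 N).le
    exact lt_of_mul_lt_mul_left h4 hC.le
  -- final transformation
  have hκα : (0:ℝ) < κ₁ * α₁ ^ N := by positivity
  have hgoal1 : (P N : ℝ) / (κ₁ * α₁ ^ N) - 1 = e N / (κ₁ * α₁ ^ N) := by
    field_simp [he]
    rfl
  rw [hgoal1, abs_div, abs_of_pos hκα]
  have hz152 : ((1.52 : ℝ)) ^ (-(N : ℤ)) = ((1.52 : ℝ) ^ N)⁻¹ := by
    rw [zpow_neg, zpow_natCast]
  rw [hz152]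
  have h152 : (0:ℝ) < (1.52:ℝ) ^ N := by positivity
  rw [show (5.6:ℝ) * ((1.52:ℝ) ^ N)⁻¹ = 5.6 / 1.52 ^ N by ring, div_lt_div_iff₀ hκα h152]
  -- |e N| * 1.52^N < 5.6 * (κ₁ * α₁^N)
  have hrhs : (0:ℝ) < 5.6 * (κ₁ * α₁ ^ N) := by positivity
  apply lt_of_pow_lt_pow_left₀ 2 hrhs.le
  have hsq : (|e N| * (1.52:ℝ) ^ N) ^ 2 = (e N) ^ 2 * (2.3104 : ℝ) ^ N := by
    rw [mul_pow, sq_abs, ← pow_mul, mul_comm N 2, pow_mul]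
    norm_num
  rw [hsq]
  calc (e N) ^ 2 * (2.3104 : ℝ) ^ N < (5.6 * κ₁) ^ 2 * (α₁ ^ N) ^ 2 := main
  _ = (5.6 * (κ₁ * α₁ ^ N)) ^ 2 := by ring
end

section
/- Suppose a, b are coprime positive integers, p₁, ..., p_k are distinct primes, and u, v are positive integers satisfying vᵃ = p₁^{g₁} ⋯ p_k^{g_k} · uᵇ for some integers g₁, ..., g_k. Then there exist a positive integer x not divisible by any pᵢ and nonnegative integers e₁, ..., e_k, f₁, ..., f_k such that u = p₁^{e₁} ⋯ p_k^{e_k} · xᵃ and v = p₁^{f₁} ⋯ p_k^{f_k} · xᵇ. -/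
theorem power_relation_structure
    (a b : ℕ) (ha : 0 < a) (hb : 0 < b) (hab : Nat.Coprime a b)
    (k : ℕ) (p : Fin k → ℕ) (hp : ∀ i, Nat.Prime (p i))
    (hpinj : Function.Injective p)
    (u v : ℕ) (hu : 0 < u) (hv : 0 < v)
    (g : Fin k → ℤ)
    (heq : (v : ℚ) ^ a = (∏ i, (p i : ℚ) ^ (g i)) * (u : ℚ) ^ b) :
    ∃ (x : ℕ) (e f : Fin k → ℕ), 0 < x ∧ (∀ i, ¬ p i ∣ x) ∧
      u = (∏ i, p i ^ (e i)) * x ^ a ∧ v = (∏ i, p i ^ (f i)) * x ^ b := by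
  classical
  have hpq : ∀ i, (p i : ℚ) ≠ 0 := fun i => Nat.cast_ne_zero.mpr (hp i).pos.ne'
  -- clear denominators: a natural-number equation
  have key : (v : ℚ) ^ a * ∏ i, (p i : ℚ) ^ ((-(g i)).toNat)
      = (∏ i, (p i : ℚ) ^ ((g i).toNat)) * (u : ℚ) ^ b := by
    rw [heq, mul_right_comm]
    congr 1
    rw [← Finset.prod_mul_distrib]
    apply Finset.prod_congr rfl
    intro i _
    rw [← zpow_natCast ((p i : ℚ)) ((-(g i)).toNat), ← zpow_natCast ((p i : ℚ)) ((g i).toNat),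
      ← zpow_add₀ (hpq i)]
    congr 1
    omega
  have E : v ^ a * ∏ i, p i ^ ((-(g i)).toNat) = (∏ i, p i ^ ((g i).toNat)) * u ^ b := by
    exact_mod_cast key
  have hprodne : ∀ c : Fin k → ℕ, (∏ i, p i ^ c i) ≠ 0 :=
    fun c => Finset.prod_ne_zero_iff.mpr fun i _ => pow_ne_zero _ (hp i).pos.ne'
  have hprodfact : ∀ (c : Fin k → ℕ) (q : ℕ), (∀ i, q ≠ p i) →
      (∏ i, p i ^ c i).factorization q = 0 := by
    intro c q hq
    rw [Nat.factorization_prod (fun i _ => pow_ne_zero _ (hp i).pos.ne'),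
      Finsupp.finset_sum_apply]
    apply Finset.sum_eq_zero
    intro i _
    rw [(hp i).factorization_pow, Finsupp.single_apply, if_neg (fun h => hq i h.symm)]
  have hprodfact' : ∀ (c : Fin k → ℕ) (j : Fin k),
      (∏ i, p i ^ c i).factorization (p j) = c j := by
    intro c j
    rw [Nat.factorization_prod (fun i _ => pow_ne_zero _ (hp i).pos.ne'),
      Finsupp.finset_sum_apply]
    rw [Finset.sum_eq_single j]
    · rw [(hp j).factorization_pow, Finsupp.single_apply, if_pos rfl]
    · intro i _ hij
      rw [(hp i).factorization_pow, Finsupp.single_apply,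
        if_neg (fun h => hij (hpinj h))]
    · intro h; exact absurd (Finset.mem_univ j) h
  -- valuation relation outside the p i
  have hfact : ∀ q : ℕ, (∀ i, q ≠ p i) →
      a * v.factorization q = b * u.factorization q := by
    intro q hq
    have h1 := congrArg (fun t : ℕ => t.factorization q) E
    simp only [Nat.factorization_mul (pow_ne_zero _ hv.ne') (hprodne _),
      Nat.factorization_mul (hprodne _) (pow_ne_zero _ hu.ne'),
      Finsupp.add_apply, Nat.factorization_pow, Finsupp.smul_apply, smul_eq_mul,
      hprodfact _ q hq] at h1
    simpa using h1
  have hdvd : ∀ q : ℕ, (∀ i, q ≠ p i) → a ∣ u.factorization q := by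
    intro q hq
    exact (Nat.Coprime.dvd_of_dvd_mul_left hab) ⟨v.factorization q, (hfact q hq).symm⟩
  set S : Finset ℕ := Finset.image p Finset.univ with hS
  set T : Finset ℕ := u.primeFactors \ S with hT
  have hTfacts : ∀ q ∈ T, q.Prime ∧ (∀ i, q ≠ p i) := by
    intro q hqT
    rw [hT, Finset.mem_sdiff] at hqT
    refine ⟨Nat.prime_of_mem_primeFactors hqT.1, fun i h => hqT.2 ?_⟩
    rw [hS, Finset.mem_image]
    exact ⟨i, Finset.mem_univ i, h.symm⟩
  set x : ℕ := ∏ q ∈ T, q ^ (u.factorization q / a) with hxdef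
  have hx0 : 0 < x := by
    apply Finset.prod_pos
    intro q hq
    exact pow_pos (hTfacts q hq).1.pos _
  have hxfact : ∀ q : ℕ, x.factorization q
      = if q ∈ T then u.factorization q / a else 0 := by
    intro q
    rw [hxdef, Nat.factorization_prod (fun r hr => pow_ne_zero _ (hTfacts r hr).1.pos.ne'),
      Finsupp.finset_sum_apply]
    rw [Finset.sum_congr rfl (fun r hr => by
      rw [(hTfacts r hr).1.factorization_pow, Finsupp.single_apply])]
    exact Finset.sum_ite_eq' T q _
  have hxndvd : ∀ i, ¬ p i ∣ x := by
    intro i hdv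
    have h1 : p i ∈ x.factorization.support := by
      rw [Nat.support_factorization]
      exact Nat.mem_primeFactors.mpr ⟨hp i, hdv, hx0.ne'⟩
    rw [Finsupp.mem_support_iff, hxfact] at h1
    apply h1
    rw [if_neg]
    intro hmem
    exact ((hTfacts _ hmem).2 i) rfl
  have hTu : ∀ q : ℕ, q ∉ T → (∀ i, q ≠ p i) → u.factorization q = 0 := by
    intro q hqT hq
    by_contra h
    apply hqT
    rw [hT, Finset.mem_sdiff]
    constructor
    · rw [← Nat.support_factorization, Finsupp.mem_support_iff]; exact h
    · intro hmem
      rw [hS, Finset.mem_image] at hmem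
      obtain ⟨i, _, hi⟩ := hmem
      exact hq i hi.symm
  refine ⟨x, fun i => u.factorization (p i), fun i => v.factorization (p i),
    hx0, hxndvd, ?_, ?_⟩
  · apply Nat.eq_of_factorization_eq hu.ne'
      (mul_ne_zero (hprodne _) (pow_ne_zero _ hx0.ne'))
    intro q
    rw [Nat.factorization_mul (hprodne _) (pow_ne_zero _ hx0.ne'),
      Finsupp.add_apply, Nat.factorization_pow, Finsupp.smul_apply, smul_eq_mul, hxfact]
    by_cases hq : ∀ i, q ≠ p i
    · rw [hprodfact _ q hq]
      by_cases hqT : q ∈ T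
      · rw [if_pos hqT, zero_add, Nat.mul_div_cancel' (hdvd q hq)]
      · rw [if_neg hqT, hTu q hqT hq, mul_zero, add_zero]
    · push_neg at hq
      obtain ⟨j, hj⟩ := hq
      subst hj
      rw [hprodfact']
      have hpjT : p j ∉ T := fun hmem => ((hTfacts _ hmem).2 j) rfl
      rw [if_neg hpjT, mul_zero, add_zero]
  · apply Nat.eq_of_factorization_eq hv.ne'
      (mul_ne_zero (hprodne _) (pow_ne_zero _ hx0.ne'))
    intro q
    rw [Nat.factorization_mul (hprodne _) (pow_ne_zero _ hx0.ne'),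
      Finsupp.add_apply, Nat.factorization_pow, Finsupp.smul_apply, smul_eq_mul, hxfact]
    by_cases hq : ∀ i, q ≠ p i
    · rw [hprodfact _ q hq]
      have h1 := hfact q hq
      by_cases hqT : q ∈ T
      · rw [if_pos hqT, zero_add]
        obtain ⟨c, hc⟩ := hdvd q hq
        rw [hc, Nat.mul_div_cancel_left c ha]
        refine Nat.eq_of_mul_eq_mul_left ha ?_
        rw [h1, hc]; ring
      · rw [if_neg hqT, mul_zero, add_zero]
        have h2 := hTu q hqT hq
        rw [h2, mul_zero] at h1
        rcases Nat.mul_eq_zero.mp h1 with h | h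
        · omega
        · exact h
    · push_neg at hq
      obtain ⟨j, hj⟩ := hq
      subst hj
      rw [hprodfact']
      have hpjT : p j ∉ T := fun hmem => ((hTfacts _ hmem).2 j) rfl
      rw [if_neg hpjT, mul_zero, add_zero]
end

section
/- Let n ≥ 2, let θ₁, ..., θₙ be real numbers, x₁, ..., xₙ integers, and Λ = x₁θ₁ + ⋯ + xₙθₙ. Let C > 0 and γ > 0 be reals and let M be the n×n integer matrix with M_{ii} = γ for 1 ≤ i ≤ n-1, M_{ij} = 0 for i ≤ n-1 and j ≠ i, and M_{nj} = ⌊Cγθⱼ⌋ for 1 ≤ j ≤ n. Let l(M) denote the minimum Euclidean norm of a nonzero vector in the lattice generated by the columns of M. If X₁ is a real number with l(M) > X₁·√((n+1)² + (n-1)γ²) and X₁ ≥ max{|x₁|, ..., |xₙ|} with not all xᵢ zero, then |Λ| > X₁/(Cγ). -/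
theorem lattice_reduction_lower_bound
    (n : ℕ) (hn : 2 ≤ n)
    (θ : Fin n → ℝ) (x : Fin n → ℤ) (hx : ∃ i, x i ≠ 0)
    (Λ : ℝ) (hΛ : Λ = ∑ i, (x i : ℝ) * θ i)
    (C γ : ℝ) (hC : 0 < C) (hγ : 0 < γ)
    (v : Fin n → EuclideanSpace ℝ (Fin n))
    (hv : ∀ j i : Fin n,
      v j i = if (i : ℕ) < n - 1 then (if i = j then γ else 0)
              else (⌊C * γ * θ j⌋ : ℝ))
    (X₁ : ℝ) (hX : ∀ i, (|x i| : ℝ) ≤ X₁)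
    (hl : ∀ c : Fin n → ℤ, (∃ j, c j ≠ 0) →
      X₁ * Real.sqrt (((n : ℝ) + 1) ^ 2 + ((n : ℝ) - 1) * γ ^ 2) <
        ‖∑ j, (c j : ℝ) • v j‖) :
    |Λ| > X₁ / (C * γ) := by
  by_contra hcon
  push_neg at hcon
  obtain ⟨i0, hi0⟩ := hx
  have hX1 : (1:ℝ) ≤ X₁ := le_trans (by exact_mod_cast Int.one_le_abs hi0) (hX i0)
  have hX0 : (0:ℝ) ≤ X₁ := le_trans zero_le_one hX1
  have hCγ : 0 < C * γ := mul_pos hC hγ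
  set S : ℝ := ∑ j, (x j : ℝ) * (⌊C * γ * θ j⌋ : ℝ) with hS
  have hSb : |S| ≤ ((n:ℝ)+1) * X₁ := by
    have h1 : |S - C*γ*Λ| ≤ (n:ℝ) * X₁ := by
      rw [hΛ, hS, Finset.mul_sum, ← Finset.sum_sub_distrib]
      calc |∑ j, ((x j:ℝ) * (⌊C*γ*θ j⌋:ℝ) - C*γ*((x j:ℝ)*θ j))|
          ≤ ∑ j, |(x j:ℝ) * (⌊C*γ*θ j⌋:ℝ) - C*γ*((x j:ℝ)*θ j)| :=
            Finset.abs_sum_le_sum_abs _ _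
        _ ≤ ∑ _j : Fin n, X₁ := by
            apply Finset.sum_le_sum
            intro j _
            have : (x j:ℝ) * (⌊C*γ*θ j⌋:ℝ) - C*γ*((x j:ℝ)*θ j)
                = (x j:ℝ) * ((⌊C*γ*θ j⌋:ℝ) - C*γ*θ j) := by ring
            rw [this, abs_mul]
            have h2 : |(⌊C*γ*θ j⌋:ℝ) - C*γ*θ j| ≤ 1 := by
              rw [abs_sub_comm, abs_of_nonneg (by linarith [Int.floor_le (C*γ*θ j)])]
              linarith [Int.lt_floor_add_one (C*γ*θ j)]
            calc |(x j:ℝ)| * |(⌊C*γ*θ j⌋:ℝ) - C*γ*θ j| ≤ |(x j:ℝ)| * 1 :=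
                  mul_le_mul_of_nonneg_left h2 (abs_nonneg _)
              _ ≤ X₁ := by rw [mul_one]; exact_mod_cast hX j
        _ = (n:ℝ) * X₁ := by simp [Finset.sum_const, mul_comm]
    have h2 : |C*γ*Λ| ≤ X₁ := by
      rw [abs_mul, abs_of_pos hCγ]
      calc C*γ*|Λ| ≤ C*γ*(X₁/(C*γ)) := mul_le_mul_of_nonneg_left hcon hCγ.le
        _ = X₁ := by field_simp
    calc |S| = |(S - C*γ*Λ) + C*γ*Λ| := by ring_nf
      _ ≤ |S - C*γ*Λ| + |C*γ*Λ| := abs_add_le _ _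
      _ ≤ (n:ℝ)*X₁ + X₁ := add_le_add h1 h2
      _ = ((n:ℝ)+1)*X₁ := by ring
  -- coordinates of w := ∑ j, x j • v j
  set w : EuclideanSpace ℝ (Fin n) := ∑ j, (x j : ℝ) • v j with hw
  have hwi : ∀ i : Fin n, w i = if (i:ℕ) < n - 1 then (x i : ℝ) * γ else S := by
    intro i
    have : w i = ∑ j, (x j : ℝ) * v j i := by
      rw [hw]
      induction (Finset.univ : Finset (Fin n)) using Finset.induction with
      | empty => simp
      | insert _ _ h ih => simp_all [Finset.sum_insert h]
    rw [this]
    by_cases hi : (i:ℕ) < n - 1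
    · simp only [hv, hi, if_true]
      rw [Finset.sum_congr rfl (fun j _ => by rw [mul_ite, mul_zero])]
      simp [Finset.sum_ite_eq]
    · simp only [hv, hi, if_false, hS]
  -- norm bound
  have key := hl x ⟨i0, hi0⟩
  have hA : (0:ℝ) ≤ ((n : ℝ) + 1) ^ 2 + ((n : ℝ) - 1) * γ ^ 2 := by
    have h2n : (2:ℝ) ≤ (n:ℝ) := by exact_mod_cast hn
    nlinarith [sq_nonneg ((n:ℝ)+1), sq_nonneg γ]
  have hnorm : ‖w‖ ≤ X₁ * Real.sqrt (((n : ℝ) + 1) ^ 2 + ((n : ℝ) - 1) * γ ^ 2) := by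
    rw [EuclideanSpace.norm_eq]
    have hsum : ∑ i, ‖w i‖ ^ 2 ≤ X₁^2 * ((((n : ℝ) + 1) ^ 2 + ((n : ℝ) - 1) * γ ^ 2)) := by
      have hterm : ∀ i : Fin n, ‖w i‖^2 ≤
          (if (i:ℕ) < n - 1 then γ^2 * X₁^2 else ((n:ℝ)+1)^2 * X₁^2) := by
        intro i
        rw [hwi i]
        by_cases hi : (i:ℕ) < n - 1
        · simp only [hi, if_true]
          rw [Real.norm_eq_abs, sq_abs]
          have : ((x i:ℝ))^2 ≤ X₁^2 := by
            rw [← sq_abs]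
            apply pow_le_pow_left₀ (abs_nonneg _)
            exact_mod_cast hX i
          nlinarith [sq_nonneg (x i : ℝ), hγ.le]
        · simp only [hi, if_false]
          rw [Real.norm_eq_abs]
          calc |S|^2 ≤ (((n:ℝ)+1)*X₁)^2 := pow_le_pow_left₀ (abs_nonneg S) hSb 2
            _ = ((n:ℝ)+1)^2 * X₁^2 := by ring
      calc ∑ i, ‖w i‖ ^ 2 ≤ ∑ i : Fin n,
            (if (i:ℕ) < n - 1 then γ^2 * X₁^2 else ((n:ℝ)+1)^2 * X₁^2) :=
            Finset.sum_le_sum (fun i _ => hterm i)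
        _ = X₁^2 * ((((n : ℝ) + 1) ^ 2 + ((n : ℝ) - 1) * γ ^ 2)) := by
            rw [Finset.sum_ite, Finset.sum_const, Finset.sum_const]
            have hc2 : (Finset.filter (fun i : Fin n => ¬((i:ℕ) < n - 1)) Finset.univ)
                = {(⟨n-1, by omega⟩ : Fin n)} := by
              ext i
              simp only [Finset.mem_filter, Finset.mem_univ, true_and, Finset.mem_singleton,
                Fin.ext_iff]
              omega
            have hc1 : (Finset.filter (fun i : Fin n => (i:ℕ) < n - 1) Finset.univ).card
                = n - 1 := by
              have := Finset.card_filter_add_card_filter_not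
                (s := (Finset.univ : Finset (Fin n))) (p := fun i : Fin n => (i:ℕ) < n - 1)
              rw [hc2] at this
              simp at this
              omega
            rw [hc1, hc2]
            simp only [Finset.card_singleton, nsmul_eq_mul, one_smul]
            have : ((n - 1 : ℕ) : ℝ) = (n:ℝ) - 1 := by
              have : (1:ℕ) ≤ n := by omega
              push_cast [Nat.cast_sub this]
              ring
            rw [this]
            ring
    calc Real.sqrt (∑ i, ‖w i‖ ^ 2)
        ≤ Real.sqrt (X₁^2 * ((((n : ℝ) + 1) ^ 2 + ((n : ℝ) - 1) * γ ^ 2))) :=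
          Real.sqrt_le_sqrt hsum
      _ = X₁ * Real.sqrt (((n : ℝ) + 1) ^ 2 + ((n : ℝ) - 1) * γ ^ 2) := by
          rw [Real.sqrt_mul (sq_nonneg X₁), Real.sqrt_sq hX0]
  rw [← hw] at key
  linarith
end
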